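/- Let S = ℕ equipped with the restriction of the Euclidean metric of ℝ, and let M = {μ ∈ M(ℕ) : ‖μ‖_TV ≤ 1} be the closed total variation unit ball. Then the restriction to M of the σ(M(ℕ), BL(ℕ))-weak topology does not coincide with the restriction to M of the topology induced by the norm ‖·‖*_BL; in particular, the total variation unit sphere {μ ∈ M(ℕ) : ‖μ‖_TV = 1} is ‖·‖*_BL-closed in M but is not closed in the relative σ(M(ℕ), BL(ℕ))-weak topology on M. -/

import Mathlib

open MeasureTheory Filter Topology

/-- A function is bounded Lipschitz. -/
def IsBL {S : Type*} [PseudoMetricSpace S] (f : S → ℝ) : Prop :=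
  (∃ C : ℝ, ∀ x, |f x| ≤ C) ∧ ∃ K : NNReal, LipschitzWith K f

/-- Pairing of a finite signed Borel measure with a function, via the Jordan decomposition. -/
noncomputable def pairing {S : Type*} [MeasurableSpace S] (μ : SignedMeasure S) (f : S → ℝ) : ℝ :=
  (∫ x, f x ∂μ.toJordanDecomposition.posPart) - ∫ x, f x ∂μ.toJordanDecomposition.negPart

/-- Total variation norm of a finite signed measure. -/
noncomputable def tvNorm {S : Type*} [MeasurableSpace S] (μ : SignedMeasure S) : ℝ :=
  (μ.totalVariation Set.univ).toReal

/-- Dual bounded Lipschitz norm on signed measures. -/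
noncomputable def blDualNorm {S : Type*} [PseudoMetricSpace S] [MeasurableSpace S]
    (μ : SignedMeasure S) : ℝ :=
  sSup {r : ℝ | ∃ (f : S → ℝ) (C : ℝ) (K : NNReal), (∀ x, |f x| ≤ C) ∧
    LipschitzWith K f ∧ C + (K : ℝ) ≤ 1 ∧ r = |pairing μ f|}

/-- The `σ(M(S), BL(S))`-weak topology on `M(S)`: the coarsest topology making
`μ ↦ ⟨μ, f⟩` continuous for every bounded Lipschitz `f`. -/
noncomputable def weakTop (S : Type*) [PseudoMetricSpace S] [MeasurableSpace S] :
    TopologicalSpace (SignedMeasure S) :=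
  ⨅ f : {g : S → ℝ // IsBL g},
    TopologicalSpace.induced (fun μ : SignedMeasure S => pairing μ f.1) inferInstance

/-- The topology on `M(S)` induced by the norm `‖·‖*_BL`, generated by the open balls. -/
noncomputable def normTop (S : Type*) [PseudoMetricSpace S] [MeasurableSpace S] :
    TopologicalSpace (SignedMeasure S) :=
  TopologicalSpace.generateFrom
    {B | ∃ (μ : SignedMeasure S) (ε : ℝ), 0 < ε ∧ B = {ν | blDualNorm (ν - μ) < ε}}

/-!
On `ℕ` distinct points are at distance at least `1`, so the function equal to `±1/3` on the two
sides of a Hahn decomposition of `ν` has `‖·‖_BL ≤ 1` and pairs with `ν` to `‖ν‖_TV / 3`. Hence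
`‖ν‖_TV ≤ 3 ‖ν - μ‖*_BL + ‖μ‖_TV`, the set `{‖μ‖_TV < 1}` is `‖·‖*_BL`-open, and the unit sphere is
norm-closed in the unit ball.

Finitely many bounded functions on an infinite set nearly agree at some pair of points `a ≠ b`
(Bolzano–Weierstrass in `ℝⁿ`), so every weak neighbourhood of `0` contains a measure
`(δ_a - δ_b) / 2` of total variation `1`. Thus `0` lies in the weak closure of the sphere.
-/

section Pairing

variable {S : Type*} [MeasurableSpace S]

lemma pairing_zero (f : S → ℝ) : pairing (0 : SignedMeasure S) f = 0 := by
  simp [pairing, SignedMeasure.toJordanDecomposition_zero]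

lemma tvNorm_zero : tvNorm (0 : SignedMeasure S) = 0 := by
  simp [tvNorm, SignedMeasure.totalVariation_zero]

lemma tvNorm_nonneg (μ : SignedMeasure S) : 0 ≤ tvNorm μ := ENNReal.toReal_nonneg

lemma tvNorm_eq_posPart_add_negPart (μ : SignedMeasure S) :
    tvNorm μ = μ.toJordanDecomposition.posPart.real Set.univ
      + μ.toJordanDecomposition.negPart.real Set.univ := by
  rw [tvNorm, SignedMeasure.totalVariation, Measure.add_apply,
    ENNReal.toReal_add (measure_ne_top _ _) (measure_ne_top _ _)]
  rfl

lemma abs_pairing_le_mul_tvNorm (μ : SignedMeasure S) {f : S → ℝ} {C : ℝ}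
    (hf : ∀ x, |f x| ≤ C) : |pairing μ f| ≤ C * tvNorm μ := by
  have hbound : ∀ ν : Measure S, ∀ᵐ x ∂ν, ‖f x‖ ≤ C := fun ν => ae_of_all _ hf
  calc |pairing μ f|
      ≤ ‖∫ x, f x ∂μ.toJordanDecomposition.posPart‖
        + ‖∫ x, f x ∂μ.toJordanDecomposition.negPart‖ := abs_sub _ _
    _ ≤ C * μ.toJordanDecomposition.posPart.real Set.univ
        + C * μ.toJordanDecomposition.negPart.real Set.univ :=
      add_le_add (norm_integral_le_of_norm_le_const (hbound _))
        (norm_integral_le_of_norm_le_const (hbound _))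
    _ = C * tvNorm μ := by rw [tvNorm_eq_posPart_add_negPart, mul_add]

lemma integrable_of_abs_le {f : S → ℝ} (hfm : Measurable f) {C : ℝ} (hfC : ∀ x, |f x| ≤ C)
    (ν : Measure S) [IsFiniteMeasure ν] : Integrable f ν :=
  .of_bound hfm.aestronglyMeasurable C (ae_of_all _ hfC)

lemma pairing_eq_integral_sub_integral {P N : Measure S} [IsFiniteMeasure P] [IsFiniteMeasure N]
    {μ : SignedMeasure S} (hμ : μ = P.toSignedMeasure - N.toSignedMeasure) {f : S → ℝ}
    (hfm : Measurable f) {C : ℝ} (hfC : ∀ x, |f x| ≤ C) :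
    pairing μ f = ∫ x, f x ∂P - ∫ x, f x ∂N := by
  have hint := integrable_of_abs_le hfm hfC
  set j := μ.toJordanDecomposition
  have hsum : j.posPart + N = P + j.negPart := by
    rw [← Measure.toSignedMeasure_eq_toSignedMeasure_iff, Measure.toSignedMeasure_add,
      Measure.toSignedMeasure_add, ← sub_eq_sub_iff_add_eq_add]
    exact μ.toSignedMeasure_toJordanDecomposition.trans hμ
  have hint_sum := congrArg (fun ν => ∫ x, f x ∂ν) hsum
  simp only [integral_add_measure (hint _) (hint _)] at hint_sum
  rw [pairing]
  linarith

lemma pairing_add {f : S → ℝ} (hfm : Measurable f) {C : ℝ} (hfC : ∀ x, |f x| ≤ C)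
    (μ ν : SignedMeasure S) : pairing (μ + ν) f = pairing μ f + pairing ν f := by
  set jμ := μ.toJordanDecomposition
  set jν := ν.toJordanDecomposition
  have hdecomp : μ + ν = (jμ.posPart + jν.posPart).toSignedMeasure
      - (jμ.negPart + jν.negPart).toSignedMeasure := by
    conv_lhs => rw [← μ.toSignedMeasure_toJordanDecomposition,
      ← ν.toSignedMeasure_toJordanDecomposition]
    simp only [JordanDecomposition.toSignedMeasure, Measure.toSignedMeasure_add]
    abel
  have hint := integrable_of_abs_le hfm hfC
  rw [pairing_eq_integral_sub_integral hdecomp hfm hfC, integral_add_measure (hint _) (hint _),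
    integral_add_measure (hint _) (hint _), pairing, pairing]
  ring

open Classical in
lemma exists_measurableSet_pairing_ite_eq (μ : SignedMeasure S) :
    ∃ s, MeasurableSet s ∧ ∀ c : ℝ,
      pairing μ (fun x => if x ∈ s then -c else c) = c * tvNorm μ := by
  obtain ⟨s, hs, hpos, hneg⟩ := μ.toJordanDecomposition.mutuallySingular
  refine ⟨s, hs, fun c => ?_⟩
  have hpos_ae : (fun x => if x ∈ s then -c else c)
      =ᵐ[μ.toJordanDecomposition.posPart] fun _ => c := by
    filter_upwards [measure_eq_zero_iff_ae_notMem.1 hpos] with x hx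
    simp only [hx, if_false]
  have hneg_ae : (fun x => if x ∈ s then -c else c)
      =ᵐ[μ.toJordanDecomposition.negPart] fun _ => -c := by
    filter_upwards [mem_ae_iff.2 hneg] with x hx
    simp only [hx, if_true]
  rw [pairing, integral_congr_ae hpos_ae, integral_congr_ae hneg_ae, integral_const,
    integral_const, tvNorm_eq_posPart_add_negPart, smul_eq_mul, smul_eq_mul]
  ring

/-- `(δ_a - δ_b) / 2` as a Jordan decomposition. -/
noncomputable def diracPair [MeasurableSingletonClass S] {a b : S} (hab : a ≠ b) :
    JordanDecomposition S where
  posPart := (1 / 2 : NNReal) • Measure.dirac a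
  negPart := (1 / 2 : NNReal) • Measure.dirac b
  mutuallySingular := by
    refine ⟨{b}, measurableSet_singleton b, ?_, ?_⟩ <;>
      simp [Measure.smul_apply, Measure.dirac_apply', hab]

lemma tvNorm_diracPair [MeasurableSingletonClass S] {a b : S} (hab : a ≠ b) :
    tvNorm (diracPair hab).toSignedMeasure = 1 := by
  rw [tvNorm_eq_posPart_add_negPart, JordanDecomposition.toJordanDecomposition_toSignedMeasure]
  norm_num [diracPair, Measure.real, ENNReal.smul_def]

lemma pairing_diracPair [MeasurableSingletonClass S] {a b : S} (hab : a ≠ b) (f : S → ℝ) :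
    pairing (diracPair hab).toSignedMeasure f = (f a - f b) / 2 := by
  rw [pairing, JordanDecomposition.toJordanDecomposition_toSignedMeasure]
  simp only [diracPair, integral_smul_nnreal_measure, integral_dirac, NNReal.smul_def]
  push_cast
  ring

end Pairing

lemma lipschitzWith_two_mul_of_abs_le {S : Type*} [PseudoMetricSpace S]
    (hsep : Pairwise fun x y : S => 1 ≤ dist x y)
    {f : S → ℝ} {C : NNReal} (hf : ∀ x, |f x| ≤ C) : LipschitzWith (2 * C) f := by
  refine LipschitzWith.of_dist_le_mul fun x y => ?_
  rcases eq_or_ne x y with rfl | hxy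
  · simp
  calc dist (f x) (f y) ≤ |f x| + |f y| := abs_sub _ _
    _ ≤ 2 * C := by linarith [hf x, hf y]
    _ ≤ 2 * C * dist x y := le_mul_of_one_le_right (by positivity) (hsep hxy)
    _ = ↑(2 * C) * dist x y := by push_cast; ring

section DualNorm

variable {S : Type*} [PseudoMetricSpace S] [MeasurableSpace S]

lemma abs_pairing_le_blDualNorm (μ : SignedMeasure S) {f : S → ℝ} {C : ℝ} {K : NNReal}
    (hf : ∀ x, |f x| ≤ C) (hK : LipschitzWith K f) (hCK : C + K ≤ 1) :
    |pairing μ f| ≤ blDualNorm μ := by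
  refine le_csSup ⟨tvNorm μ, ?_⟩ ⟨f, C, K, hf, hK, hCK, rfl⟩
  rintro _ ⟨g, D, L, hg, -, hDL, rfl⟩
  calc |pairing μ g| ≤ D * tvNorm μ := abs_pairing_le_mul_tvNorm μ hg
    _ ≤ tvNorm μ := mul_le_of_le_one_left (tvNorm_nonneg μ) (by linarith [L.coe_nonneg])

lemma blDualNorm_zero : blDualNorm (0 : SignedMeasure S) = 0 := by
  refine le_antisymm (Real.sSup_nonpos fun _ ⟨f, _, _, _, _, _, hr⟩ => ?_)
    (Real.sSup_nonneg fun _ ⟨_, _, _, _, _, _, hr⟩ => hr ▸ abs_nonneg _)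
  rw [hr, pairing_zero, abs_zero]

open Classical in
lemma tvNorm_le_three_mul_blDualNorm_sub_add (hsep : Pairwise fun x y : S => 1 ≤ dist x y)
    (ν μ : SignedMeasure S) : tvNorm ν ≤ 3 * blDualNorm (ν - μ) + tvNorm μ := by
  obtain ⟨s, hs, hpairing⟩ := exists_measurableSet_pairing_ite_eq ν
  set f : S → ℝ := fun x => if x ∈ s then -(1 / 3) else 1 / 3
  have hf : ∀ x, |f x| ≤ ((1 / 3 : NNReal) : ℝ) := fun x => by
    simp only [f]; split_ifs <;> norm_num
  have hfm : Measurable f := measurable_const.ite hs measurable_const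
  have hνμ : |pairing (ν - μ) f| ≤ blDualNorm (ν - μ) :=
    abs_pairing_le_blDualNorm _ hf (lipschitzWith_two_mul_of_abs_le hsep hf) (by norm_num)
  have hμ : |pairing μ f| ≤ 1 / 3 * tvNorm μ := by
    simpa using abs_pairing_le_mul_tvNorm μ hf
  have hsplit : pairing ν f = pairing (ν - μ) f + pairing μ f := by
    rw [← pairing_add hfm hf, sub_add_cancel]
  have hν : pairing ν f = 1 / 3 * tvNorm ν := hpairing _
  linarith [le_abs_self (pairing (ν - μ) f), le_abs_self (pairing μ f)]

lemma isOpen_setOf_tvNorm_lt (hsep : Pairwise fun x y : S => 1 ≤ dist x y) (r : ℝ) :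
    IsOpen[normTop S] {μ : SignedMeasure S | tvNorm μ < r} := by
  let := normTop S
  refine isOpen_iff_forall_mem_open.2 fun μ hμ => ⟨{ν | blDualNorm (ν - μ) < (r - tvNorm μ) / 3},
    fun ν hν => ?_, TopologicalSpace.isOpen_generateFrom_of_mem ⟨μ, _, ?_, rfl⟩, ?_⟩
  · have := tvNorm_le_three_mul_blDualNorm_sub_add hsep ν μ
    simp only [Set.mem_ofPred_eq] at hν ⊢
    linarith
  · simp only [Set.mem_ofPred_eq] at hμ
    linarith
  · simp only [Set.mem_ofPred_eq, sub_self, blDualNorm_zero] at hμ ⊢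
    linarith

lemma isClosed_induced_normTop_setOf_tvNorm_eq_one
    (hsep : Pairwise fun x y : S => 1 ≤ dist x y) :
    IsClosed[.induced Subtype.val (normTop S)]
      {μ : {μ : SignedMeasure S // tvNorm μ ≤ 1} | tvNorm μ.1 = 1} := by
  let := normTop S
  have hsphere : {μ : {μ : SignedMeasure S // tvNorm μ ≤ 1} | tvNorm μ.1 = 1}
      = Subtype.val ⁻¹' {μ : SignedMeasure S | tvNorm μ < 1}ᶜ := by
    ext μ
    simp [le_antisymm_iff, μ.2]
  rw [hsphere]
  exact (isOpen_setOf_tvNorm_lt hsep 1).isClosed_compl.preimage continuous_subtype_val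

end DualNorm

lemma exists_ne_dist_lt_of_isBounded_range {S E : Type*} [Infinite S] [PseudoMetricSpace E]
    [ProperSpace E] {F : S → E} (hF : Bornology.IsBounded (Set.range F)) {ε : ℝ} (hε : 0 < ε) :
    ∃ a b, a ≠ b ∧ dist (F a) (F b) < ε := by
  let e := Infinite.natEmbedding S
  obtain ⟨_, -, φ, hφ, hlim⟩ := tendsto_subseq_of_bounded hF fun n => Set.mem_range_self (e n)
  obtain ⟨N, hN⟩ := Metric.cauchySeq_iff'.1 hlim.cauchySeq ε hε
  exact ⟨e (φ (N + 1)), e (φ N), e.injective.ne (hφ.injective.ne (by omega)), hN _ (by omega)⟩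

lemma exists_ne_forall_abs_sub_lt {ι S : Type*} [Infinite S] {I : Set ι} (hI : I.Finite)
    (f : ι → S → ℝ) (hf : ∀ i, ∃ C, ∀ x, |f i x| ≤ C) {ε : ι → ℝ} (hε : ∀ i ∈ I, 0 < ε i) :
    ∃ a b, a ≠ b ∧ ∀ i ∈ I, |f i a - f i b| < ε i := by
  have := hI.fintype
  let F : S → I → ℝ := fun x i => f i x / ε i
  have hF : Bornology.IsBounded (Set.range F) := by
    refine Bornology.forall_isBounded_image_eval_iff.1 fun i => ?_
    obtain ⟨C, hC⟩ := hf i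
    refine (Metric.isBounded_Icc (-C / ε i) (C / ε i)).subset ?_
    rintro _ ⟨_, ⟨x, rfl⟩, rfl⟩
    have hεi := hε i i.2
    have hCx := abs_le.1 (hC x)
    exact ⟨div_le_div_of_nonneg_right hCx.1 hεi.le, div_le_div_of_nonneg_right hCx.2 hεi.le⟩
  obtain ⟨a, b, hab, hdist⟩ := exists_ne_dist_lt_of_isBounded_range hF one_pos
  refine ⟨a, b, hab, fun i hi => ?_⟩
  have hεi := hε i hi
  have := (dist_pi_lt_iff one_pos).1 hdist ⟨i, hi⟩
  rwa [Real.dist_eq, ← sub_div, abs_div, abs_of_pos hεi, div_lt_one hεi] at this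

section WeakTopology

variable {S : Type*} [PseudoMetricSpace S] [MeasurableSpace S]

lemma hasBasis_nhds_zero_weakTop :
    (@nhds _ (weakTop S) 0).HasBasis
      (fun p : Set {g : S → ℝ // IsBL g} × ({g : S → ℝ // IsBL g} → ℝ) =>
        p.1.Finite ∧ ∀ f ∈ p.1, 0 < p.2 f)
      fun p => ⋂ f ∈ p.1, {μ | |pairing μ f.1| < p.2 f} := by
  rw [weakTop, nhds_iInf]
  simp only [nhds_induced, pairing_zero]
  refine Filter.HasBasis.iInf' (ι' := fun _ => ℝ) (p := fun _ ε => 0 < ε)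
    (s := fun (f : {g : S → ℝ // IsBL g}) ε => {μ | |pairing μ f.1| < ε}) fun f => ?_
  convert Metric.nhds_basis_ball.comap (fun μ : SignedMeasure S => pairing μ f.1) using 1
  ext ε μ
  simp

lemma zero_mem_weakTop_closure_setOf_tvNorm_eq_one [MeasurableSingletonClass S] [Infinite S] :
    (0 : SignedMeasure S) ∈ closure[weakTop S] {μ | tvNorm μ = 1} := by
  let := weakTop S
  refine (mem_closure_iff_nhds_basis hasBasis_nhds_zero_weakTop).2 fun ⟨I, ε⟩ ⟨hI, hε⟩ => ?_
  obtain ⟨a, b, hab, hclose⟩ :=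
    exists_ne_forall_abs_sub_lt hI (fun f : {g : S → ℝ // IsBL g} => f.1) (fun f => f.2.1) hε
  refine ⟨(diracPair hab).toSignedMeasure, tvNorm_diracPair hab,
    Set.mem_iInter₂.2 fun f hf => ?_⟩
  rw [Set.mem_ofPred_eq, pairing_diracPair, abs_div, abs_two]
  linarith [hclose f hf, hε f hf]


lemma not_isClosed_induced_weakTop_setOf_tvNorm_eq_one [MeasurableSingletonClass S] [Infinite S] :
    ¬ IsClosed[.induced Subtype.val (weakTop S)]
      {μ : {μ : SignedMeasure S // tvNorm μ ≤ 1} | tvNorm μ.1 = 1} := by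
  let := weakTop S
  intro hclosed
  have hzero : (⟨0, by simp [tvNorm_zero]⟩ : {μ : SignedMeasure S // tvNorm μ ≤ 1}) ∈
      closure {μ : {μ : SignedMeasure S // tvNorm μ ≤ 1} | tvNorm μ.1 = 1} := by
    rw [closure_subtype]
    convert zero_mem_weakTop_closure_setOf_tvNorm_eq_one (S := S) using 2
    ext μ
    exact ⟨by rintro ⟨μ, hμ, rfl⟩; exact hμ, fun hμ => ⟨⟨μ, hμ.le⟩, hμ, rfl⟩⟩
  rw [hclosed.closure_eq] at hzero
  simp [tvNorm_zero] at hzero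

end WeakTopology

/-- **Counterexample on `ℕ`** (with the metric inherited from the Euclidean metric of `ℝ`):
on the closed total variation unit ball `M = {μ : ‖μ‖_TV ≤ 1}` of `M(ℕ)`, the relative
`σ(M(ℕ), BL(ℕ))`-weak topology does not coincide with the relative `‖·‖*_BL`-norm topology;
in particular the unit sphere `{μ : ‖μ‖_TV = 1}` is `‖·‖*_BL`-closed in `M` but not closed in
the relative weak topology on `M`. -/
theorem weak_and_norm_topologies_differ_on_tv_ball :
    (TopologicalSpace.induced
        ((↑) : {μ : SignedMeasure ℕ // tvNorm μ ≤ 1} → SignedMeasure ℕ) (weakTop ℕ) ≠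
      TopologicalSpace.induced
        ((↑) : {μ : SignedMeasure ℕ // tvNorm μ ≤ 1} → SignedMeasure ℕ) (normTop ℕ)) ∧
    @IsClosed {μ : SignedMeasure ℕ // tvNorm μ ≤ 1}
      (TopologicalSpace.induced
        ((↑) : {μ : SignedMeasure ℕ // tvNorm μ ≤ 1} → SignedMeasure ℕ) (normTop ℕ))
      {μ : {μ : SignedMeasure ℕ // tvNorm μ ≤ 1} | tvNorm (μ : SignedMeasure ℕ) = 1} ∧
    ¬ @IsClosed {μ : SignedMeasure ℕ // tvNorm μ ≤ 1}
      (TopologicalSpace.induced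
        ((↑) : {μ : SignedMeasure ℕ // tvNorm μ ≤ 1} → SignedMeasure ℕ) (weakTop ℕ))
      {μ : {μ : SignedMeasure ℕ // tvNorm μ ≤ 1} | tvNorm (μ : SignedMeasure ℕ) = 1} := by
  have h_norm := isClosed_induced_normTop_setOf_tvNorm_eq_one Nat.pairwise_one_le_dist
  have h_weak := not_isClosed_induced_weakTop_setOf_tvNorm_eq_one (S := ℕ)
  exact ⟨fun h => h_weak (h ▸ h_norm), h_norm, h_weak⟩
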